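/- arXiv:1701.00734 — 6 statements merged into one kernel-verified Lean document; each statement's English description precedes it below -/
import Mathlib

section
/- Let Ω ⊆ ℂ^d be open and connected and f : Ω → ℂ holomorphic. If there exist an open connected set U with U ∩ Ω ≠ ∅ and U ∩ Ωᶜ ≠ ∅, a holomorphic F : U → ℂ, and a connected component V of U ∩ Ω with F = f on V, then there exist open Euclidean balls B₁, B₂ with B₁ ⊆ cl(B₁) ⊆ B₂ ∩ Ω, B₂ ∩ Ω ≠ ∅, B₂ ∩ Ωᶜ ≠ ∅, and a bounded holomorphic G : B₂ → ℂ with G = f on B₁. -/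
open Metric Set

theorem stmt1 {d : ℕ} (Ω : Set (EuclideanSpace ℂ (Fin d)))
    (hΩo : IsOpen Ω) (hΩc : IsConnected Ω)
    (f : EuclideanSpace ℂ (Fin d) → ℂ) (hf : DifferentiableOn ℂ f Ω)
    (hext : ∃ (U : Set (EuclideanSpace ℂ (Fin d))) (F : EuclideanSpace ℂ (Fin d) → ℂ)
      (x : EuclideanSpace ℂ (Fin d)),
      IsOpen U ∧ IsConnected U ∧ (U ∩ Ω).Nonempty ∧ (U ∩ Ωᶜ).Nonempty ∧
      DifferentiableOn ℂ F U ∧ x ∈ U ∩ Ω ∧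
      EqOn F f (connectedComponentIn (U ∩ Ω) x)) :
    ∃ (c₁ c₂ : EuclideanSpace ℂ (Fin d)) (r₁ r₂ : ℝ), 0 < r₁ ∧ 0 < r₂ ∧
      closedBall c₁ r₁ ⊆ ball c₂ r₂ ∩ Ω ∧
      (ball c₂ r₂ ∩ Ω).Nonempty ∧ (ball c₂ r₂ ∩ Ωᶜ).Nonempty ∧
      ∃ (G : EuclideanSpace ℂ (Fin d) → ℂ) (M : ℝ),
        DifferentiableOn ℂ G (ball c₂ r₂) ∧
        (∀ z ∈ ball c₂ r₂, ‖G z‖ ≤ M) ∧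
        EqOn G f (ball c₁ r₁) := by
  obtain ⟨U, F, x, hUo, hUc, hUΩ, hUΩc, hF, hx, hFf⟩ := hext
  set V := connectedComponentIn (U ∩ Ω) x with hVdef
  have hVo : IsOpen V := (hUo.inter hΩo).connectedComponentIn
  have hxV : x ∈ V := mem_connectedComponentIn hx
  have hVsub : V ⊆ U ∩ Ω := connectedComponentIn_subset _ _
  -- find a point p ∈ U in the closure of V but outside V
  have hp : ∃ p, p ∈ U ∧ p ∈ closure V ∧ p ∉ V := by
    by_contra h
    push_neg at h
    obtain ⟨y, hyU, hyΩc⟩ := hUΩc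
    have hy' : y ∉ closure V := fun hc => hyΩc ((hVsub (h y hyU hc)).2)
    have := hUc.isPreconnected V (closure V)ᶜ hVo isClosed_closure.isOpen_compl
      (fun z hz => by
        by_cases hzc : z ∈ closure V
        · exact Or.inl (h z hz hzc)
        · exact Or.inr hzc)
      ⟨x, hx.1, hxV⟩ ⟨y, hyU, hy'⟩
    obtain ⟨z, _, hz1, hz2⟩ := this
    exact hz2 (subset_closure hz1)
  obtain ⟨p, hpU, hpcl, hpV⟩ := hp
  -- p is not in Ω
  have hpΩ : p ∉ Ω := by
    intro hpΩ
    obtain ⟨ε, hε, hball⟩ := Metric.isOpen_iff.1 (hUo.inter hΩo) p ⟨hpU, hpΩ⟩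
    obtain ⟨q, hqV, hqd⟩ := Metric.mem_closure_iff.1 hpcl ε hε
    have hqball : q ∈ ball p ε := by simpa [Metric.mem_ball, dist_comm] using hqd
    have hunion : IsPreconnected (V ∪ ball p ε) :=
      (isPreconnected_connectedComponentIn).union q hqV hqball
        (convex_ball p ε).isPreconnected
    have hsub : V ∪ ball p ε ⊆ V := by
      rw [hVdef]
      exact hunion.subset_connectedComponentIn (Or.inl hxV)
        (union_subset hVsub hball)
    exact hpV (hsub (Or.inr (mem_ball_self hε)))
  -- pick r₂ with closedBall p r₂ ⊆ U
  obtain ⟨r₂, hr₂, hr₂U⟩ := (Metric.nhds_basis_closedBall.mem_iff).1 (hUo.mem_nhds hpU)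
  -- pick q ∈ V close to p
  obtain ⟨q, hqV, hqd⟩ := Metric.mem_closure_iff.1 hpcl r₂ hr₂
  have hqball : q ∈ ball p r₂ := by simpa [Metric.mem_ball, dist_comm] using hqd
  -- pick r₁ with closedBall q r₁ ⊆ V ∩ ball p r₂
  have hopen : IsOpen (V ∩ ball p r₂) := hVo.inter isOpen_ball
  obtain ⟨r₁, hr₁, hr₁sub⟩ := (Metric.nhds_basis_closedBall.mem_iff).1
    (hopen.mem_nhds ⟨hqV, hqball⟩)
  -- boundedness of F on closedBall p r₂
  obtain ⟨M, hM⟩ := (isCompact_closedBall p r₂).exists_bound_of_continuousOn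
    (hF.continuousOn.mono hr₂U)
  refine ⟨q, p, r₁, r₂, hr₁, hr₂, ?_, ⟨q, hqball, (hVsub hqV).2⟩, ⟨p, mem_ball_self hr₂, hpΩ⟩,
    F, M, hF.mono (ball_subset_closedBall.trans hr₂U), fun z hz => hM z (ball_subset_closedBall hz), ?_⟩
  · intro z hz
    have := hr₁sub hz
    exact ⟨this.2, (hVsub this.1).2⟩
  · intro z hz
    exact hFf (hr₁sub (ball_subset_closedBall hz)).1
end

section
/- Let B₁ ⊆ cl(B₁) ⊆ B₂ be open balls in ℂ^d with B₁ nonempty, let f be holomorphic on an open set containing B₁, and suppose for each n there is a holomorphic Fₙ : B₂ → ℂ with |Fₙ| ≤ M on B₂ and Fₙ = fₙ on B₁, where fₙ are holomorphic and fₙ → f pointwise on B₁. Then there exists a holomorphic F : B₂ → ℂ with |F| ≤ M on B₂ and F = f on B₁. -/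
/-!
By the Schwarz lemma, holomorphic functions bounded by `M` on a ball are uniformly Lipschitz
near each point, so the `Fₙ` form an equicontinuous family. Along an ultrafilter finer than
`atTop` they converge pointwise (closed balls of `ℂ` are compact), hence by Ascoli locally
uniformly on `B₂`. Cauchy estimates then make the derivatives converge locally uniformly too, so
the limit `F` is holomorphic; it is bounded by `M`, and on `B₁` it equals `lim fₙ = f`.
-/

open Metric Set Filter

open scoped Topology

theorem mapsTo_closedBall_two_mul_of_norm_le {α E : Type*} [SeminormedAddCommGroup E]
    {g : α → E} {s : Set α} {c : α} {C : ℝ} (hc : c ∈ s)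
    (hC : ∀ x ∈ s, ‖g x‖ ≤ C) :
    MapsTo g s (closedBall (g c) (2 * C)) := fun x hx => by
  rw [mem_closedBall, dist_eq_norm]
  linarith [norm_sub_le (g x) (g c), hC x hx, hC c hc]

theorem EquicontinuousOn.tendstoUniformlyOn_of_tendsto {ι X α : Type*} [TopologicalSpace X]
    [UniformSpace α] {G : ι → X → α} {g : X → α} {l : Filter ι} {K : Set X}
    (hK : IsCompact K) (hG : EquicontinuousOn G K)
    (hlim : ∀ x ∈ K, Tendsto (fun i => G i x) l (𝓝 (g x))) :
    TendstoUniformlyOn G g l K := by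
  have hpi : Tendsto ((⋃₀ {K}).domRestrict ∘ G) l (𝓝 ((⋃₀ {K}).domRestrict g)) :=
    tendsto_pi_nhds.mpr fun x => hlim x (by simpa using x.2)
  have := (EquicontinuousOn.tendsto_uniformOnFun_iff_pi' (𝔖 := {K}) (by simpa using hK)
    (by simpa using hG) l g).mpr hpi
  exact UniformOnFun.tendsto_iff_tendstoUniformlyOn.mp this K rfl

theorem EquicontinuousOn.tendstoLocallyUniformlyOn_of_tendsto {ι X α : Type*}
    [TopologicalSpace X] [LocallyCompactSpace X] [UniformSpace α] {G : ι → X → α}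
    {g : X → α} {l : Filter ι} {U : Set X} (hU : IsOpen U) (hG : EquicontinuousOn G U)
    (hlim : ∀ x ∈ U, Tendsto (fun i => G i x) l (𝓝 (g x))) :
    TendstoLocallyUniformlyOn G g l U :=
  (tendstoLocallyUniformlyOn_iff_forall_isCompact hU).mpr fun _K hKU hK =>
    (hG.mono hKU).tendstoUniformlyOn_of_tendsto hK fun x hx => hlim x (hKU hx)

section Holomorphic

variable {E F : Type*} [NormedAddCommGroup E] [NormedSpace ℂ E] [NormedAddCommGroup F]
  [NormedSpace ℂ F] {ι : Type*} {l : Filter ι} {G : ι → E → F} {g : E → F} {s : Set E}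

namespace Complex

theorem dist_le_two_mul_div_mul_dist_of_norm_le {c z : E} {R C : ℝ}
    (hd : DifferentiableOn ℂ g (ball c R)) (hC : ∀ x ∈ ball c R, ‖g x‖ ≤ C)
    (hz : z ∈ ball c R) : dist (g z) (g c) ≤ 2 * C / R * dist z c :=
  dist_le_div_mul_dist_of_mapsTo_ball hd
    (mapsTo_closedBall_two_mul_of_norm_le (mem_ball_self (pos_of_mem_ball hz)) hC) hz

theorem norm_fderiv_le_two_mul_div_of_norm_le {c : E} {R C : ℝ} (hR : 0 < R)
    (hd : DifferentiableOn ℂ g (ball c R)) (hC : ∀ x ∈ ball c R, ‖g x‖ ≤ C) :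
    ‖fderiv ℂ g c‖ ≤ 2 * C / R :=
  norm_fderiv_le_div_of_mapsTo_ball hd
    (mapsTo_closedBall_two_mul_of_norm_le (mem_ball_self hR) hC) hR

theorem equicontinuousOn_of_norm_le {C : ℝ} (hs : IsOpen s)
    (hd : ∀ i, DifferentiableOn ℂ (G i) s) (hC : ∀ i, ∀ x ∈ s, ‖G i x‖ ≤ C) :
    EquicontinuousOn G s := by
  intro x₀ hx₀
  obtain ⟨r, hr, hrs⟩ := Metric.isOpen_iff.mp hs x₀ hx₀
  refine (Metric.equicontinuousAt_of_continuity_modulus (fun x => 2 * C / r * dist x x₀) ?_ G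
    ?_).equicontinuousWithinAt s
  · exact ((continuous_id.dist continuous_const).const_mul _).tendsto' x₀ 0 (by simp)
  · filter_upwards [ball_mem_nhds x₀ hr] with x hx i
    rw [dist_comm]
    exact dist_le_two_mul_div_mul_dist_of_norm_le ((hd i).mono hrs)
      (fun y hy => hC i y (hrs hy)) hx

end Complex

theorem UniformCauchySeqOn.fderiv_of_ball_subset {t : Set E} {r : ℝ} (hr : 0 < r)
    (hG : UniformCauchySeqOn G l s) (hd : ∀ i, DifferentiableOn ℂ (G i) s)
    (hts : ∀ y ∈ t, ball y r ⊆ s) : UniformCauchySeqOn (fun i => fderiv ℂ (G i)) l t := by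
  intro u hu
  obtain ⟨ε, hε, hεu⟩ := Metric.mem_uniformity_dist.mp hu
  filter_upwards [hG _ (Metric.dist_mem_uniformity (by positivity : 0 < ε * r / 4))]
    with m hm y hy
  apply hεu
  have hys : s ∈ 𝓝 y := mem_of_superset (ball_mem_nhds y hr) (hts y hy)
  have hb : ∀ z ∈ ball y r, ‖(G m.1 - G m.2) z‖ ≤ ε * r / 4 := fun z hz =>
    (dist_eq_norm (G m.1 z) (G m.2 z) ▸ hm z (hts y hy hz)).le
  calc dist (fderiv ℂ (G m.1) y) (fderiv ℂ (G m.2) y) = ‖fderiv ℂ (G m.1 - G m.2) y‖ := by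
        rw [dist_eq_norm, fderiv_sub ((hd _).differentiableAt hys) ((hd _).differentiableAt hys)]
    _ ≤ 2 * (ε * r / 4) / r :=
        Complex.norm_fderiv_le_two_mul_div_of_norm_le hr (((hd _).sub (hd _)).mono (hts y hy)) hb
    _ < ε := by field_simp; linarith

variable [CompleteSpace F] [l.NeBot]

theorem TendstoUniformlyOn.complex_differentiableOn (hs : IsOpen s)
    (hG : TendstoUniformlyOn G g l s) (hd : ∀ i, DifferentiableOn ℂ (G i) s) :
    DifferentiableOn ℂ g s := by
  intro x hx
  obtain ⟨r, hr, hrs⟩ := Metric.isOpen_iff.mp hs x hx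
  have hball : ∀ y ∈ ball x (r / 2), ball y (r / 2) ⊆ s := fun y hy z hz =>
    hrs (mem_ball.mpr (by linarith [dist_triangle z y x, mem_ball.mp hy, mem_ball.mp hz]))
  have hxs : ball x (r / 2) ⊆ s := (ball_subset_ball (half_le_self hr.le)).trans hrs
  have hcauchy : UniformCauchySeqOn (fun i => fderiv ℂ (G i)) l (ball x (r / 2)) :=
    hG.uniformCauchySeqOn.fderiv_of_ball_subset (half_pos hr) hd hball
  have hderiv := hcauchy.tendstoUniformlyOn_of_tendsto
    (f := fun y => limUnder l fun i => fderiv ℂ (G i) y) fun y hy =>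
    tendsto_nhds_limUnder (CompleteSpace.complete (hcauchy.cauchy_map hy))
  refine (hasFDerivAt_of_tendstoUniformlyOn isOpen_ball hderiv (fun i y hy => ?_)
    (fun y hy => hG.tendsto_at (hxs hy)) (mem_ball_self (half_pos hr))).differentiableAt
    |>.differentiableWithinAt
  exact ((hd i).differentiableAt (hs.mem_nhds (hxs hy))).hasFDerivAt

theorem TendstoLocallyUniformlyOn.complex_differentiableOn [LocallyCompactSpace E]
    (hs : IsOpen s) (hG : TendstoLocallyUniformlyOn G g l s)
    (hd : ∀ i, DifferentiableOn ℂ (G i) s) :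
    DifferentiableOn ℂ g s := by
  intro x hx
  obtain ⟨K, hKx, hKs, hK⟩ := local_compact_nhds (hs.mem_nhds hx)
  have hunif : TendstoUniformlyOn G g l (interior K) :=
    ((tendstoLocallyUniformlyOn_iff_forall_isCompact hs).mp hG K hKs hK).mono interior_subset
  have hxK : interior K ∈ 𝓝 x := isOpen_interior.mem_nhds (mem_interior_iff_mem_nhds.mpr hKx)
  exact ((hunif.complex_differentiableOn isOpen_interior fun i =>
    (hd i).mono (interior_subset.trans hKs)).differentiableAt hxK).differentiableWithinAt

end Holomorphic

theorem stmt3_general {d : ℕ} (c₁ c₂ : EuclideanSpace ℂ (Fin d)) (r₁ r₂ : ℝ)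
    (hsub : closedBall c₁ r₁ ⊆ ball c₂ r₂)
    (f : EuclideanSpace ℂ (Fin d) → ℂ)
    (M : ℝ)
    (fseq : ℕ → EuclideanSpace ℂ (Fin d) → ℂ)
    (hconv : ∀ z ∈ ball c₁ r₁, Tendsto (fun n => fseq n z) atTop (nhds (f z)))
    (Fseq : ℕ → EuclideanSpace ℂ (Fin d) → ℂ)
    (hFseq : ∀ n, DifferentiableOn ℂ (Fseq n) (ball c₂ r₂))
    (hFbd : ∀ n, ∀ z ∈ ball c₂ r₂, ‖Fseq n z‖ ≤ M)
    (hFeq : ∀ n, EqOn (Fseq n) (fseq n) (ball c₁ r₁)) :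
    ∃ F : EuclideanSpace ℂ (Fin d) → ℂ,
      DifferentiableOn ℂ F (ball c₂ r₂) ∧
      (∀ z ∈ ball c₂ r₂, ‖F z‖ ≤ M) ∧
      EqOn F f (ball c₁ r₁) := by
  -- An ultrafilter finer than `atTop` plays the role of Montel's subsequence.
  set φ := Ultrafilter.of (atTop : Filter ℕ)
  set F := fun z => limUnder (φ : Filter ℕ) fun n => Fseq n z
  have hlim : ∀ z ∈ ball c₂ r₂, Tendsto (fun n => Fseq n z) φ (𝓝 (F z)) := fun z hz =>
    tendsto_nhds_limUnder <| (isCompact_closedBall (0 : ℂ) M).ultrafilter_le_nhds'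
      (φ.map fun n => Fseq n z)
      (Ultrafilter.mem_map.mpr <| Eventually.of_forall fun n => by simpa using hFbd n z hz)
      |>.imp fun _ => And.right
  have hloc : TendstoLocallyUniformlyOn Fseq F φ (ball c₂ r₂) :=
    (Complex.equicontinuousOn_of_norm_le isOpen_ball hFseq
      hFbd).tendstoLocallyUniformlyOn_of_tendsto isOpen_ball hlim
  refine ⟨F, hloc.complex_differentiableOn isOpen_ball hFseq, fun z hz =>
    le_of_tendsto (hlim z hz).norm (Eventually.of_forall fun n => hFbd n z hz), fun z hz => ?_⟩
  have hf : Tendsto (fun n => Fseq n z) φ (𝓝 (f z)) :=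
    ((hconv z hz).mono_left (Ultrafilter.of_le _)).congr fun n => (hFeq n hz).symm
  exact tendsto_nhds_unique (hlim z (hsub (ball_subset_closedBall hz))) hf

theorem stmt3 {d : ℕ} (c₁ c₂ : EuclideanSpace ℂ (Fin d)) (r₁ r₂ : ℝ)
    (hr₁ : 0 < r₁)
    (hsub : closedBall c₁ r₁ ⊆ ball c₂ r₂)
    (f : EuclideanSpace ℂ (Fin d) → ℂ)
    (hf : ∃ W : Set (EuclideanSpace ℂ (Fin d)),
      IsOpen W ∧ ball c₁ r₁ ⊆ W ∧ DifferentiableOn ℂ f W)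
    (M : ℝ)
    (fseq : ℕ → EuclideanSpace ℂ (Fin d) → ℂ)
    (hfseq : ∀ n, DifferentiableOn ℂ (fseq n) (ball c₁ r₁))
    (hconv : ∀ z ∈ ball c₁ r₁, Tendsto (fun n => fseq n z) atTop (nhds (f z)))
    (Fseq : ℕ → EuclideanSpace ℂ (Fin d) → ℂ)
    (hFseq : ∀ n, DifferentiableOn ℂ (Fseq n) (ball c₂ r₂))
    (hFbd : ∀ n, ∀ z ∈ ball c₂ r₂, ‖Fseq n z‖ ≤ M)
    (hFeq : ∀ n, EqOn (Fseq n) (fseq n) (ball c₁ r₁)) :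
    ∃ F : EuclideanSpace ℂ (Fin d) → ℂ,
      DifferentiableOn ℂ F (ball c₂ r₂) ∧
      (∀ z ∈ ball c₂ r₂, ‖F z‖ ≤ M) ∧
      EqOn F f (ball c₁ r₁) :=
  stmt3_general c₁ c₂ r₁ r₂ hsub f M fseq hconv Fseq hFseq hFbd hFeq
end

section
/- Let Ω ⊆ ℂ^d be open connected and X ⊆ H(Ω) a completely metrizable topological vector space in which convergence implies pointwise convergence on Ω. Fix open balls B₁ ⊆ cl(B₁) ⊆ B₂ ∩ Ω with B₂ ∩ Ω ≠ ∅, B₂ ∩ Ωᶜ ≠ ∅, and M ≥ 1. Then the set T(B₁,B₂,M) = {f ∈ X : there exists holomorphic F on B₂ with |F| ≤ M and F = f on B₁} is closed in X. -/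
open Metric Set Filter Topology

/-!
Take a sequence in the set converging in `X`, with bounded holomorphic extensions `G n` on the big
ball. Along an ultrafilter refining `atTop`, the `G n` converge pointwise on the big ball (values
lie in a compact disc), and their derivatives at any point converge too (they are bounded by the
Cauchy estimate, in a finite-dimensional space). The second-order Schwarz estimate
`‖G w - G z - G'(z)(w - z)‖ ≤ 4M (|w - z| / R)²` is uniform in `n`, so it passes to the limit
and makes the limit holomorphic. On the small ball the limit agrees with `f`, since convergence
in `X` implies pointwise convergence on `Ω`.
-/

lemma IsCompact.exists_tendsto_ultrafilter {ι X : Type*} [TopologicalSpace X] {K : Set X}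
    (hK : IsCompact K) (𝒰 : Ultrafilter ι) {u : ι → X} (hu : ∀ n, u n ∈ K) :
    ∃ x ∈ K, Tendsto u 𝒰 (𝓝 x) :=
  hK.ultrafilter_le_nhds' (𝒰.map u) (Ultrafilter.mem_map.2 (univ_mem' hu))

lemma exists_forall_tendsto_ultrafilter_of_mapsTo {ι α X : Type*} [TopologicalSpace X]
    [Nonempty X] {K : Set X} (hK : IsCompact K) (𝒰 : Ultrafilter ι) {s : Set α}
    {u : ι → α → X}
    (hu : ∀ n, MapsTo (u n) s K) :
    ∃ g : α → X, MapsTo g s K ∧ ∀ z ∈ s, Tendsto (fun n => u n z) 𝒰 (𝓝 (g z)) := by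
  have : ∀ z ∈ s, ∃ x ∈ K, Tendsto (fun n => u n z) 𝒰 (𝓝 x) := fun z hz =>
    hK.exists_tendsto_ultrafilter 𝒰 fun n => hu n hz
  choose! g hgK hg using this
  exact ⟨g, hgK, hg⟩

lemma hasFDerivAt_of_norm_sub_sub_le_sq {E F : Type*} [NormedAddCommGroup E] [NormedSpace ℂ E]
    [NormedAddCommGroup F] [NormedSpace ℂ F] {f : E → F} {D : E →L[ℂ] F} {z : E} {C : ℝ}
    (h : ∀ᶠ w in 𝓝 z, ‖f w - f z - D (w - z)‖ ≤ C * ‖w - z‖ ^ 2) :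
    HasFDerivAt f D z := by
  refine .of_isLittleO <| (Asymptotics.IsBigO.of_bound C ?_).trans_isLittleO
    ((Asymptotics.isLittleO_norm_pow_id one_lt_two).comp_tendsto
      (tendsto_sub_nhds_zero_iff.2 tendsto_id))
  filter_upwards [h] with w hw
  simpa using hw

lemma mapsTo_closedBall_two_mul_of_norm_le_s5 {α F : Type*} [SeminormedAddCommGroup F] {f : α → F}
    {s : Set α} {z : α} {M : ℝ} (hb : ∀ u ∈ s, ‖f u‖ ≤ M) (hz : z ∈ s) :
    MapsTo f s (closedBall (f z) (2 * M)) := fun u hu => by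
  rw [mem_closedBall, dist_eq_norm]
  linarith [norm_sub_le (f u) (f z), hb u hu, hb z hz]

section Cauchy

variable {E F : Type*} [NormedAddCommGroup E] [NormedSpace ℂ E]
  [NormedAddCommGroup F] [NormedSpace ℂ F] {f : E → F} {z w : E} {R M : ℝ}

lemma norm_fderiv_le_of_norm_le (hd : DifferentiableOn ℂ f (ball z R))
    (hb : ∀ u ∈ ball z R, ‖f u‖ ≤ M) (hR : 0 < R) :
    ‖fderiv ℂ f z‖ ≤ 2 * M / R :=
  Complex.norm_fderiv_le_div_of_mapsTo_ball hd
    (mapsTo_closedBall_two_mul_of_norm_le_s5 hb (mem_ball_self hR)) hR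

lemma norm_sub_sub_fderiv_le_of_norm_le (hd : DifferentiableOn ℂ f (ball z R))
    (hb : ∀ u ∈ ball z R, ‖f u‖ ≤ M) (hw : w ∈ ball z R) :
    ‖f w - f z - fderiv ℂ f z (w - z)‖ ≤ 4 * M * (dist w z / R) ^ 2 := by
  have hR : 0 < R := nonempty_ball.mp ⟨w, hw⟩
  set ψ : E → F := fun u => f u - f z - fderiv ℂ f z (u - z)
  have hDf : HasFDerivAt f (fderiv ℂ f z) z :=
    (hd.differentiableAt (isOpen_ball.mem_nhds (mem_ball_self hR))).hasFDerivAt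
  have hψd : DifferentiableOn ℂ ψ (ball z R) :=
    (hd.sub_const _).sub
      ((fderiv ℂ f z).differentiable.comp (differentiable_id.sub_const z)).differentiableOn
  have hM : 0 ≤ M := (norm_nonneg _).trans (hb z (mem_ball_self hR))
  have hψ : MapsTo ψ (ball z R) (closedBall (ψ z) (4 * M)) := fun u hu => by
    have hD := norm_fderiv_le_of_norm_le hd hb hR
    have hf : ‖f u - f z‖ ≤ 2 * M := by
      simpa [dist_eq_norm] using mapsTo_closedBall_two_mul_of_norm_le_s5 hb (mem_ball_self hR) hu
    have hu' : ‖u - z‖ ≤ R := (mem_ball_iff_norm.mp hu).le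
    have hlin : ‖fderiv ℂ f z (u - z)‖ ≤ 2 * M := calc
      _ ≤ ‖fderiv ℂ f z‖ * ‖u - z‖ := (fderiv ℂ f z).le_opNorm _
      _ ≤ 2 * M / R * R := by gcongr
      _ = 2 * M := div_mul_cancel₀ _ hR.ne'
    rw [mem_closedBall, dist_eq_norm]
    simp only [ψ, sub_self, map_zero, sub_zero]
    linarith [norm_sub_le (f u - f z) (fderiv ℂ f z (u - z))]
  -- `ψ` vanishes to second order at `z`, so the Schwarz lemma gains a factor `(dist w z / R) ^ 2`.
  have hψo : (ψ · - ψ z) =o[𝓝 z] (fun u => ‖u - z‖ ^ 1) := by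
    simpa [ψ] using hDf.isLittleO.norm_right
  simpa [ψ, dist_eq_norm] using
    Complex.dist_le_mul_div_pow_of_mapsTo_ball_of_isLittleO hψd hψ hψo hw

end Cauchy

lemma differentiableOn_of_tendsto_of_norm_le {ι E F : Type*} [NormedAddCommGroup E]
    [NormedSpace ℂ E] [FiniteDimensional ℂ E] [NormedAddCommGroup F] [NormedSpace ℂ F]
    [FiniteDimensional ℂ F] {l : Filter ι} [l.NeBot] {U : Set E} (hU : IsOpen U)
    {f : ι → E → F} {g : E → F} {M : ℝ} (hd : ∀ n, DifferentiableOn ℂ (f n) U)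
    (hb : ∀ n, ∀ z ∈ U, ‖f n z‖ ≤ M)
    (hg : ∀ z ∈ U, Tendsto (fun n => f n z) l (𝓝 (g z))) :
    DifferentiableOn ℂ g U := by
  intro z hz
  obtain ⟨R, hR, hzR⟩ := isOpen_iff.mp hU z hz
  obtain ⟨D, -, hD⟩ :=
    (isCompact_closedBall (0 : E →L[ℂ] F) (2 * M / R)).exists_tendsto_ultrafilter
    (Ultrafilter.of l) (u := fun n => fderiv ℂ (f n) z) fun n =>
      mem_closedBall_zero_iff.mpr <| norm_fderiv_le_of_norm_le ((hd n).mono hzR)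
        (fun u hu => hb n u (hzR hu)) hR
  have hg𝒰 : ∀ w ∈ ball z R, Tendsto (fun n => f n w) (Ultrafilter.of l) (𝓝 (g w)) :=
    fun w hw => (hg w (hzR hw)).mono_left (Ultrafilter.of_le l)
  have hquad : ∀ w ∈ ball z R,
      ‖g w - g z - D (w - z)‖ ≤ 4 * M / R ^ 2 * ‖w - z‖ ^ 2 := by
    intro w hw
    refine le_of_tendsto (((hg𝒰 w hw).sub (hg𝒰 z (mem_ball_self hR))).sub
      (((ContinuousLinearMap.apply ℂ F (w - z)).continuous.tendsto D).comp hD)).norm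
      (Eventually.of_forall fun n => ?_)
    refine (norm_sub_sub_fderiv_le_of_norm_le ((hd n).mono hzR) (fun u hu => hb n u (hzR hu))
      hw).trans_eq ?_
    rw [dist_eq_norm, div_pow]
    ring
  exact (hasFDerivAt_of_norm_sub_sub_le_sq
    (eventually_of_mem (ball_mem_nhds z hR) hquad)).differentiableAt.differentiableWithinAt

theorem stmt5_general {d : ℕ} (Ω : Set (EuclideanSpace ℂ (Fin d)))
    (X : Type*) [AddCommGroup X] [Module ℂ X] [MetricSpace X]
    (ι : X →ₗ[ℂ] (EuclideanSpace ℂ (Fin d) → ℂ))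
    (hptw : ∀ (g : ℕ → X) (f : X), Tendsto g atTop (nhds f) →
      ∀ z ∈ Ω, Tendsto (fun n => ι (g n) z) atTop (nhds (ι f z)))
    (c₁ c₂ : EuclideanSpace ℂ (Fin d)) (r₁ r₂ : ℝ)
    (hsub : closedBall c₁ r₁ ⊆ ball c₂ r₂ ∩ Ω)
    (M : ℝ) :
    IsClosed {f : X | ∃ F : EuclideanSpace ℂ (Fin d) → ℂ,
      DifferentiableOn ℂ F (ball c₂ r₂) ∧
      (∀ z ∈ ball c₂ r₂, ‖F z‖ ≤ M) ∧
      EqOn F (ι f) (ball c₁ r₁)} := by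
  rw [← isSeqClosed_iff_isClosed]
  intro g f hg hgf
  choose G hGd hGb hGf using hg
  let 𝒰 := Ultrafilter.of (atTop : Filter ℕ)
  obtain ⟨F, hFM, hF⟩ := exists_forall_tendsto_ultrafilter_of_mapsTo
    (isCompact_closedBall (0 : ℂ) M) 𝒰 fun n z hz => mem_closedBall_zero_iff.2 (hGb n z hz)
  refine ⟨F, differentiableOn_of_tendsto_of_norm_le isOpen_ball hGd hGb hF,
    fun z hz => mem_closedBall_zero_iff.1 (hFM hz), fun z hz => ?_⟩
  obtain ⟨hz₂, hzΩ⟩ := hsub (ball_subset_closedBall hz)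
  exact tendsto_nhds_unique (hF z hz₂) <|
    ((hptw g f hgf z hzΩ).mono_left (Ultrafilter.of_le _)).congr fun n => (hGf n hz).symm

theorem stmt5 {d : ℕ} (Ω : Set (EuclideanSpace ℂ (Fin d)))
    (hΩo : IsOpen Ω) (hΩc : IsConnected Ω)
    (X : Type*) [AddCommGroup X] [Module ℂ X] [MetricSpace X] [CompleteSpace X]
    [IsTopologicalAddGroup X] [ContinuousSMul ℂ X]
    (ι : X →ₗ[ℂ] (EuclideanSpace ℂ (Fin d) → ℂ)) (hinj : Function.Injective ι)
    (hholo : ∀ f : X, DifferentiableOn ℂ (ι f) Ω)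
    (hptw : ∀ (g : ℕ → X) (f : X), Tendsto g atTop (nhds f) →
      ∀ z ∈ Ω, Tendsto (fun n => ι (g n) z) atTop (nhds (ι f z)))
    (c₁ c₂ : EuclideanSpace ℂ (Fin d)) (r₁ r₂ : ℝ) (hr₁ : 0 < r₁) (hr₂ : 0 < r₂)
    (hsub : closedBall c₁ r₁ ⊆ ball c₂ r₂ ∩ Ω)
    (h1 : (ball c₂ r₂ ∩ Ω).Nonempty) (h2 : (ball c₂ r₂ ∩ Ωᶜ).Nonempty)
    (M : ℝ) (hM : 1 ≤ M) :
    IsClosed {f : X | ∃ F : EuclideanSpace ℂ (Fin d) → ℂ,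
      DifferentiableOn ℂ F (ball c₂ r₂) ∧
      (∀ z ∈ ball c₂ r₂, ‖F z‖ ≤ M) ∧
      EqOn F (ι f) (ball c₁ r₁)} :=
  stmt5_general Ω X ι hptw c₁ c₂ r₁ r₂ hsub M
end

section
/- Under the hypotheses of Theorem 3.3, Ω is an X-domain of holomorphy if and only if Ω is a weak X-domain of holomorphy. -/
/-!
Suppose every `f ∈ X` extends boundedly across some admissible ball pair. Shrinking the pair, one
may take centres in a countable dense set, rational radii and an integer bound, so `X` is a
countable union of the sets `S` of those `f` that extend with a fixed bound across a fixed pair.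
Each `S` is closed: by Vitali's theorem, a bounded sequence of holomorphic functions on the big
ball that converges on the small ball converges locally uniformly on the big ball, to a
holomorphic function. (Convergence spreads from a small ball to a concentric larger one by
Hadamard's three-circle theorem, and from there along the connected big ball.) By Baire, some `S`
has an interior point `x₀`. For any `h ∈ X` and small `t ≠ 0` also `x₀ + t • h ∈ S`, so
`h = t⁻¹ • ((x₀ + t • h) - x₀)` extends boundedly across that pair, contradicting the assumption
that `Ω` is a weak `X`-domain of holomorphy.
-/

open Metric Set Filter

/-- `f` is extendable in the sense of Riemann domains from the domain `Ω`. -/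
def ExtendableRiemann {d : ℕ} (Ω : Set (EuclideanSpace ℂ (Fin d)))
    (f : EuclideanSpace ℂ (Fin d) → ℂ) : Prop :=
  ∃ (c₁ c₂ : EuclideanSpace ℂ (Fin d)) (r₁ r₂ : ℝ), 0 < r₁ ∧ 0 < r₂ ∧
    closedBall c₁ r₁ ⊆ ball c₂ r₂ ∩ Ω ∧
    (ball c₂ r₂ ∩ Ω).Nonempty ∧ (ball c₂ r₂ ∩ Ωᶜ).Nonempty ∧
    ∃ (F : EuclideanSpace ℂ (Fin d) → ℂ) (M : ℝ),
      DifferentiableOn ℂ F (ball c₂ r₂) ∧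
      (∀ z ∈ ball c₂ r₂, ‖F z‖ ≤ M) ∧
      EqOn F f (ball c₁ r₁)

open Topology TopologicalSpace

open Complex.HadamardThreeLines in
theorem Complex.norm_le_interp_of_mem_annulus {F : Type*} [NormedAddCommGroup F]
    [NormedSpace ℂ F] {f : ℂ → F} {c z : ℂ} {r R a b : ℝ} (hr : 0 < r) (hrR : r < R)
    (hrz : r ≤ ‖z - c‖) (hzR : ‖z - c‖ ≤ R) (hd : DifferentiableOn ℂ f (closedBall c R))
    (ha : ∀ w ∈ sphere c r, ‖f w‖ ≤ a) (hb : ∀ w ∈ sphere c R, ‖f w‖ ≤ b) :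
    ‖f z‖ ≤ a ^ (1 - (Real.log ‖z - c‖ - Real.log r) / (Real.log R - Real.log r)) *
      b ^ ((Real.log ‖z - c‖ - Real.log r) / (Real.log R - Real.log r)) := by
  have hmaps : MapsTo (fun w => c + exp w) (verticalClosedStrip (Real.log r) (Real.log R))
      (closedBall c R) := by
    intro w hw
    simp only [mem_closedBall, dist_eq_norm, add_sub_cancel_left, norm_exp]
    exact (Real.exp_le_exp.2 hw.2).trans (Real.exp_log (hr.trans hrR)).le
  have hstrip : ∀ x, 0 < x → ∀ w ∈ re ⁻¹' {Real.log x}, c + exp w ∈ sphere c x := by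
    intro x hx w hw
    simp_all [norm_exp, Real.exp_log hx]
  have hz0 : z - c ≠ 0 := norm_pos_iff.1 (hr.trans_le hrz)
  have key := norm_le_interp_of_mem_verticalClosedStrip' (f := fun w => f (c + exp w))
    (z := log (z - c)) (a := a) (b := b) (Real.log_lt_log hr hrR) ?_ ?_ ?_
    (fun w hw => ha _ (hstrip r hr w hw)) (fun w hw => hb _ (hstrip R (hr.trans hrR) w hw))
  · simpa [log_re, exp_log hz0] using key
  · simp only [verticalClosedStrip, mem_preimage, log_re, mem_Icc]
    exact ⟨Real.log_le_log hr hrz, Real.log_le_log (hr.trans_le hrz) hzR⟩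
  · refine DifferentiableOn.diffContOnCl ?_
    refine (hd.comp (differentiable_exp.const_add c).differentiableOn hmaps).mono ?_
    exact closure_minimal (preimage_mono Ioo_subset_Icc_self) (isClosed_Icc.preimage continuous_re)
  · refine ((isCompact_closedBall c R).bddAbove_image hd.continuousOn.norm).mono ?_
    rintro _ ⟨w, hw, rfl⟩
    exact ⟨_, hmaps hw, rfl⟩

section Holomorphic

variable {E F : Type*} [NormedAddCommGroup E] [NormedSpace ℂ E]
  [NormedAddCommGroup F] [NormedSpace ℂ F]

theorem norm_le_interp_of_mem_annulus {f : E → F} {c z : E} {r R a b : ℝ} (hr : 0 < r)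
    (hrR : r < R) (hrz : r ≤ ‖z - c‖) (hzR : ‖z - c‖ ≤ R)
    (hd : DifferentiableOn ℂ f (closedBall c R))
    (ha : ∀ w ∈ sphere c r, ‖f w‖ ≤ a) (hb : ∀ w ∈ sphere c R, ‖f w‖ ≤ b) :
    ‖f z‖ ≤ a ^ (1 - (Real.log ‖z - c‖ - Real.log r) / (Real.log R - Real.log r)) *
      b ^ ((Real.log ‖z - c‖ - Real.log r) / (Real.log R - Real.log r)) := by
  set v : E := ((‖z - c‖⁻¹ : ℝ) : ℂ) • (z - c)
  have hzc : ‖z - c‖ ≠ 0 := (hr.trans_le hrz).ne'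
  have hv : ∀ t : ℂ, ‖t • v‖ = ‖t‖ := by simp [v, norm_smul, hzc]
  have hz : c + ((‖z - c‖ : ℝ) : ℂ) • v = z := by
    rw [smul_smul, ← Complex.ofReal_mul, mul_inv_cancel₀ hzc]
    simp
  have key := Complex.norm_le_interp_of_mem_annulus (f := fun t : ℂ => f (c + t • v)) (c := 0)
    (z := ‖z - c‖) hr hrR (by simpa using hrz) (by simpa using hzR)
    (hd.comp ((differentiable_id.smul_const v).const_add c).differentiableOn
      (fun t ht => by simpa [dist_eq_norm, hv] using ht))
    (fun t ht => ha _ (by simpa [dist_eq_norm, hv] using ht))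
    (fun t ht => hb _ (by simpa [dist_eq_norm, hv] using ht))
  rwa [sub_zero, Complex.norm_real, Real.norm_of_nonneg (norm_nonneg _), hz] at key

theorem cauchySeq_of_uniformCauchySeqOn_closedBall {f : ℕ → E → F} {a z : E} {s ρ K : ℝ}
    (hs : 0 < s) (hd : ∀ n, DifferentiableOn ℂ (f n) (ball a ρ))
    (hK : ∀ n, ∀ w ∈ ball a ρ, ‖f n w‖ ≤ K) (hcauchy : UniformCauchySeqOn f atTop (closedBall a s))
    (hz : z ∈ ball a ρ) : CauchySeq (f · z) := by
  rcases le_or_gt ‖z - a‖ s with hzs | hsz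
  · exact hcauchy.cauchySeq (by rwa [mem_closedBall, dist_eq_norm])
  obtain ⟨R, hzR, hRρ⟩ := exists_between (show ‖z - a‖ < ρ by rwa [← dist_eq_norm])
  set θ := (Real.log ‖z - a‖ - Real.log s) / (Real.log R - Real.log s)
  have hθ : θ < 1 := by
    rw [div_lt_one (by linarith [Real.log_lt_log hs (hsz.trans hzR)])]
    linarith [Real.log_lt_log (hs.trans hsz) hzR]
  have hbound : ∀ m n ε, (∀ w ∈ closedBall a s, dist (f m w) (f n w) < ε) →
      dist (f m z) (f n z) ≤ ε ^ (1 - θ) * (2 * K) ^ θ := by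
    intro m n ε hε
    have hfK : ∀ w ∈ sphere a R, ‖(f m - f n) w‖ ≤ 2 * K := fun w hw => by
      have hw' : w ∈ ball a ρ := sphere_subset_closedBall.trans (closedBall_subset_ball hRρ) hw
      exact (norm_sub_le _ _).trans (by linarith [hK m w hw', hK n w hw'])
    rw [dist_eq_norm]
    exact norm_le_interp_of_mem_annulus (f := f m - f n) hs (hsz.trans hzR) hsz.le
      hzR.le (((hd m).sub (hd n)).mono (closedBall_subset_ball hRρ))
      (fun w hw => (dist_eq_norm (f m w) _ ▸ hε w (sphere_subset_closedBall hw)).le) hfK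
  have hlim : Tendsto (fun ε : ℝ => ε ^ (1 - θ) * (2 * K) ^ θ) (𝓝 0) (𝓝 0) := by
    simpa [Real.zero_rpow (sub_pos.2 hθ).ne'] using
      ((Real.continuousAt_rpow_const 0 (1 - θ) (Or.inr (sub_pos.2 hθ).le)).tendsto.mul_const
        ((2 * K) ^ θ))
  rw [Metric.cauchySeq_iff]
  intro δ hδ
  obtain ⟨ε, hεδ, hε⟩ := (((hlim.mono_left nhdsWithin_le_nhds).eventually (gt_mem_nhds hδ)).and
    (self_mem_nhdsWithin : Ioi (0 : ℝ) ∈ 𝓝[>] 0)).exists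
  obtain ⟨N, hN⟩ := Metric.uniformCauchySeqOn_iff.1 hcauchy ε hε
  exact ⟨N, fun m hm n hn => (hbound m n ε (hN m hm n hn)).trans_lt hεδ⟩

theorem equicontinuousAt_of_norm_le {ι : Type*} {f : ι → E → F} {x : E} {r K : ℝ} (hr : 0 < r)
    (hd : ∀ i, DifferentiableOn ℂ (f i) (ball x r)) (hK : ∀ i, ∀ z ∈ ball x r, ‖f i z‖ ≤ K) :
    EquicontinuousAt f x := by
  refine Metric.equicontinuousAt_of_continuity_modulus (fun y => 2 * K / r * dist y x) ?_ f ?_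
  · simpa using ((continuous_id.dist (continuous_const (y := x))).tendsto x).const_mul (2 * K / r)
  · filter_upwards [ball_mem_nhds x hr] with y hy i
    rw [dist_comm]
    refine Complex.dist_le_div_mul_dist_of_mapsTo_ball (hd i) (fun w hw => ?_) hy
    rw [mem_closedBall, dist_eq_norm, two_mul]
    exact (norm_sub_le _ _).trans (add_le_add (hK i w hw) (hK i x (mem_ball_self hr)))

theorem tendstoLocallyUniformlyOn_of_equicontinuousAt {X α ι : Type*} [TopologicalSpace X]
    [LocallyCompactSpace X] [UniformSpace α] {f : ι → X → α} {g : X → α} {l : Filter ι} {U : Set X}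
    (hU : IsOpen U) (heq : ∀ x ∈ U, EquicontinuousAt f x)
    (hfg : ∀ x ∈ U, Tendsto (f · x) l (𝓝 (g x))) : TendstoLocallyUniformlyOn f g l U := by
  refine (tendstoLocallyUniformlyOn_iff_forall_isCompact hU).2 fun K hKU hK => ?_
  have := (EquicontinuousOn.tendsto_uniformOnFun_iff_pi' (𝔖 := {K}) (by simpa using hK)
    (fun K' hK' x hx => (heq x (hKU (mem_singleton_iff.1 hK' ▸ hx))).equicontinuousWithinAt K')
    l g).2 ?_
  · exact UniformOnFun.tendsto_iff_tendstoUniformlyOn.1 this K rfl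
  · rw [tendsto_pi_nhds]
    rintro ⟨x, hx⟩
    exact hfg x (hKU (by simpa using hx))

theorem TendstoLocallyUniformlyOn.differentiableOn_of_properSpace [ProperSpace E] [CompleteSpace F]
    {ι : Type*} {f : ι → E → F} {g : E → F} {l : Filter ι} [l.NeBot] {U : Set E} (hU : IsOpen U)
    (hfg : TendstoLocallyUniformlyOn f g l U) (hf : ∀ i, DifferentiableOn ℂ (f i) U) :
    DifferentiableOn ℂ g U := by
  intro x hx
  obtain ⟨ε, hε, hεU⟩ := nhds_basis_closedBall.mem_iff.1 (hU.mem_nhds hx)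
  obtain ⟨r, hr, rfl⟩ : ∃ r, 0 < r ∧ 2 * r = ε := ⟨ε / 2, by positivity, by ring⟩
  have hcauchy : UniformCauchySeqOn f l (closedBall x (2 * r)) :=
    ((tendstoLocallyUniformlyOn_iff_forall_isCompact hU).1 hfg _ hεU
      (isCompact_closedBall x _)).uniformCauchySeqOn
  have hxU : ball x r ⊆ U :=
    ball_subset_closedBall.trans ((closedBall_subset_closedBall (by linarith)).trans hεU)
  have hdiff : ∀ i, ∀ w ∈ ball x r, DifferentiableAt ℂ (f i) w := fun i w hw =>
    (hf i w (hxU hw)).differentiableAt (hU.mem_nhds (hxU hw))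
  -- By Schwarz's lemma, the derivatives inherit uniform Cauchyness on the smaller ball.
  have hcauchy' : UniformCauchySeqOn (fun i => fderiv ℂ (f i)) l (ball x r) := by
    intro u hu
    obtain ⟨δ, hδ, hδu⟩ := Metric.mem_uniformity_dist.1 hu
    filter_upwards [hcauchy _ (dist_mem_uniformity (show 0 < δ * r / 4 by positivity))]
      with mn hmn w hw
    have hsub : ball w r ⊆ closedBall x (2 * r) :=
      ball_subset_closedBall.trans (closedBall_subset_closedBall' (by linarith [mem_ball.1 hw]))
    have hmaps : MapsTo (f mn.1 - f mn.2) (ball w r)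
        (closedBall ((f mn.1 - f mn.2) w) (δ * r / 2)) := by
      intro y hy
      have h1 := hmn y (hsub hy)
      have h2 := hmn w (hsub (mem_ball_self hr))
      rw [dist_eq_norm] at h1 h2
      rw [mem_closedBall, dist_eq_norm]
      exact (norm_sub_le _ _).trans (by simp only [Pi.sub_apply]; linarith)
    apply hδu
    rw [dist_eq_norm, ← fderiv_sub (hdiff _ w hw) (hdiff _ w hw)]
    calc ‖fderiv ℂ (f mn.1 - f mn.2) w‖ ≤ δ * r / 2 / r :=
          Complex.norm_fderiv_le_div_of_mapsTo_ball
            (((hf _).sub (hf _)).mono (hsub.trans hεU)) hmaps hr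
      _ < δ := by rw [show δ * r / 2 / r = δ / 2 by field_simp]; linarith
  have hlim : ∀ w ∈ ball x r, Tendsto (fun i => fderiv ℂ (f i) w) l
      (𝓝 (limUnder l fun i => fderiv ℂ (f i) w)) := fun w hw =>
    tendsto_nhds_limUnder (CompleteSpace.complete (hcauchy'.cauchy_map hw))
  exact (hasFDerivAt_of_tendstoUniformlyOn isOpen_ball (hcauchy'.tendstoUniformlyOn_of_tendsto hlim)
    (fun i w hw => (hdiff i w hw).hasFDerivAt) (fun w hw => hfg.tendsto_at (hxU hw))
    (mem_ball_self hr)).differentiableAt.differentiableWithinAt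

theorem tendstoLocallyUniformlyOn_limUnder [ProperSpace E] [CompleteSpace F] {f : ℕ → E → F}
    {U : Set E} {K : ℝ} (hU : IsOpen U) (hd : ∀ n, DifferentiableOn ℂ (f n) U)
    (hK : ∀ n, ∀ z ∈ U, ‖f n z‖ ≤ K) (hcauchy : ∀ z ∈ U, CauchySeq (f · z)) :
    TendstoLocallyUniformlyOn f (fun z => limUnder atTop (f · z)) atTop U := by
  refine tendstoLocallyUniformlyOn_of_equicontinuousAt hU (fun x hx => ?_)
    fun z hz => (hcauchy z hz).tendsto_limUnder
  obtain ⟨r, hr, hrU⟩ := Metric.isOpen_iff.1 hU x hx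
  exact equicontinuousAt_of_norm_le hr (fun n => (hd n).mono hrU) fun n z hz => hK n z (hrU hz)

theorem cauchySeq_of_eventually_cauchySeq [ProperSpace E] [CompleteSpace F] {f : ℕ → E → F}
    {U : Set E} {K : ℝ} {z₀ : E} (hU : IsOpen U) (hUc : IsPreconnected U)
    (hd : ∀ n, DifferentiableOn ℂ (f n) U) (hK : ∀ n, ∀ z ∈ U, ‖f n z‖ ≤ K) (hz₀ : z₀ ∈ U)
    (hcauchy : ∀ᶠ z in 𝓝 z₀, CauchySeq (f · z)) : ∀ z ∈ U, CauchySeq (f · z) := by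
  set P := {z | ∀ᶠ w in 𝓝 z, CauchySeq (f · w)}
  suffices U ⊆ P from fun z hz => (this hz).self_of_nhds
  refine hUc.subset_of_closure_inter_subset isOpen_setOfPred_eventually_nhds ⟨z₀, hz₀, hcauchy⟩ ?_
  rintro z ⟨hzP, hzU⟩
  obtain ⟨ρ, hρ, hρU⟩ := Metric.isOpen_iff.1 hU z hzU
  obtain ⟨w, hwP, hzw⟩ := Metric.mem_closure_iff.1 hzP (ρ / 2) (half_pos hρ)
  obtain ⟨s, hs, hsw⟩ := Metric.eventually_nhds_iff_ball.1 hwP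
  have hwU : ball w (ρ / 2) ⊆ U := fun y hy => hρU <| mem_ball.2 <|
    (dist_triangle y w z).trans_lt (by linarith [mem_ball.1 hy, dist_comm z w])
  set s' := min s (ρ / 2)
  have hs' : 0 < s' := lt_min hs (half_pos hρ)
  have hs'U : ball w s' ⊆ U := (ball_subset_ball (min_le_right _ _)).trans hwU
  -- Convergence near `w` is locally uniform, and the three-circle estimate spreads it over
  -- `ball w (ρ / 2)`, a neighbourhood of `z`.
  have hunif : UniformCauchySeqOn f atTop (closedBall w (s' / 2)) :=
    ((tendstoLocallyUniformlyOn_iff_forall_isCompact isOpen_ball).1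
      (tendstoLocallyUniformlyOn_limUnder isOpen_ball (fun n => (hd n).mono hs'U)
        (fun n y hy => hK n y (hs'U hy)) fun y hy => hsw y (ball_subset_ball (min_le_left _ _) hy))
      _ (closedBall_subset_ball (half_lt_self hs')) (isCompact_closedBall _ _)).uniformCauchySeqOn
  filter_upwards [isOpen_ball.mem_nhds (mem_ball.2 (by rwa [dist_comm] at hzw))] with y hy
  exact cauchySeq_of_uniformCauchySeqOn_closedBall (half_pos hs') (fun n => (hd n).mono hwU)
    (fun n y hy => hK n y (hwU hy)) hunif hy

theorem exists_differentiableOn_tendstoLocallyUniformlyOn [ProperSpace E] [CompleteSpace F]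
    {f : ℕ → E → F} {U : Set E} {K : ℝ} {z₀ : E} (hU : IsOpen U) (hUc : IsPreconnected U)
    (hd : ∀ n, DifferentiableOn ℂ (f n) U) (hK : ∀ n, ∀ z ∈ U, ‖f n z‖ ≤ K) (hz₀ : z₀ ∈ U)
    (hcauchy : ∀ᶠ z in 𝓝 z₀, CauchySeq (f · z)) :
    ∃ g, DifferentiableOn ℂ g U ∧ TendstoLocallyUniformlyOn f g atTop U := by
  have hlim := tendstoLocallyUniformlyOn_limUnder hU hd hK
    (cauchySeq_of_eventually_cauchySeq hU hUc hd hK hz₀ hcauchy)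
  exact ⟨_, hlim.differentiableOn_of_properSpace hU hd, hlim⟩

def HasBoundedExtension (g : E → F) (U V : Set E) (M : ℝ) : Prop :=
  ∃ G : E → F, DifferentiableOn ℂ G V ∧ (∀ z ∈ V, ‖G z‖ ≤ M) ∧ EqOn G g U

namespace HasBoundedExtension

variable {g g' : E → F} {U V : Set E} {M M' : ℝ}

theorem mono {U' V' : Set E} (h : HasBoundedExtension g U V M) (hU : U' ⊆ U) (hV : V' ⊆ V)
    (hM : M ≤ M') : HasBoundedExtension g U' V' M' :=
  let ⟨G, hGd, hGM, hGg⟩ := h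
  ⟨G, hGd.mono hV, fun z hz => (hGM z (hV hz)).trans hM, hGg.mono hU⟩

theorem sub (h : HasBoundedExtension g U V M) (h' : HasBoundedExtension g' U V M') :
    HasBoundedExtension (g - g') U V (M + M') :=
  let ⟨G, hGd, hGM, hGg⟩ := h
  let ⟨G', hGd', hGM', hGg'⟩ := h'
  ⟨G - G', hGd.sub hGd', fun z hz => (norm_sub_le _ _).trans (add_le_add (hGM z hz) (hGM' z hz)),
    fun _ hz => congr_arg₂ (· - ·) (hGg hz) (hGg' hz)⟩

theorem const_smul (h : HasBoundedExtension g U V M) (a : ℂ) :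
    HasBoundedExtension (a • g) U V (‖a‖ * M) :=
  let ⟨G, hGd, hGM, hGg⟩ := h
  ⟨a • G, hGd.const_smul a, fun z hz => (norm_smul a (G z)).trans_le
    (mul_le_mul_of_nonneg_left (hGM z hz) (norm_nonneg a)), fun _ hz => congr_arg (a • ·) (hGg hz)⟩

end HasBoundedExtension

theorem isClosed_setOf_hasBoundedExtension [ProperSpace E] [CompleteSpace F] {X : Type*}
    [TopologicalSpace X] [SequentialSpace X] (ev : X → E → F) {U V : Set E} {M : ℝ}
    (hev : ∀ (u : ℕ → X) (x : X), Tendsto u atTop (𝓝 x) →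
      ∀ z ∈ U, Tendsto (fun n => ev (u n) z) atTop (𝓝 (ev x z)))
    (hU : IsOpen U) (hUne : U.Nonempty) (hUV : U ⊆ V) (hV : IsOpen V) (hVc : IsPreconnected V) :
    IsClosed {x | HasBoundedExtension (ev x) U V M} := by
  refine IsSeqClosed.isClosed fun u x hu hux => ?_
  choose G hGd hGM hGu using hu
  have hGx : ∀ z ∈ U, Tendsto (G · z) atTop (𝓝 (ev x z)) := fun z hz => by
    simpa only [hGu _ hz] using hev u x hux z hz
  obtain ⟨z₀, hz₀⟩ := hUne
  obtain ⟨g, hgd, hg⟩ := exists_differentiableOn_tendstoLocallyUniformlyOn hV hVc hGd hGM (hUV hz₀)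
    (mem_of_superset (hU.mem_nhds hz₀) fun z hz => (hGx z hz).cauchySeq)
  exact ⟨g, hgd, fun z hz => le_of_tendsto (hg.tendsto_at hz).norm (.of_forall (hGM · z hz)),
    fun z hz => tendsto_nhds_unique (hg.tendsto_at (hUV hz)) (hGx z hz)⟩

theorem exists_hasBoundedExtension_of_mem_interior {X : Type*} [AddCommGroup X] [Module ℂ X]
    [TopologicalSpace X] [ContinuousAdd X] [ContinuousSMul ℂ X] (ι : X →ₗ[ℂ] (E → F))
    {U V : Set E} {M : ℝ} {x₀ : X} (hx₀ : x₀ ∈ interior {x | HasBoundedExtension (ι x) U V M})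
    (h : X) : ∃ M', HasBoundedExtension (ι h) U V M' := by
  have hline : Tendsto (fun t : ℂ => x₀ + t • h) (𝓝[≠] 0) (𝓝 x₀) :=
    ((continuous_const.add (continuous_id.smul continuous_const)).tendsto' 0 x₀
      (by simp)).mono_left nhdsWithin_le_nhds
  obtain ⟨t, ht, ht0⟩ :=
    ((hline.eventually (mem_interior_iff_mem_nhds.1 hx₀)).and self_mem_nhdsWithin).exists
  have hh : ι h = t⁻¹ • (ι (x₀ + t • h) - ι x₀) := by
    rw [map_add, map_smul, add_sub_cancel_left, smul_smul, inv_mul_cancel₀ ht0, one_smul]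
  have hx₀' : x₀ ∈ {x | HasBoundedExtension (ι x) U V M} := interior_subset hx₀
  exact ⟨_, hh ▸ (ht.sub hx₀').const_smul t⁻¹⟩

section BallPair

variable {α : Type*} [MetricSpace α]

def AdmissibleBallPair (Ω : Set α) (c₁ c₂ : α) (r₁ r₂ : ℝ) : Prop :=
  0 < r₁ ∧ 0 < r₂ ∧ closedBall c₁ r₁ ⊆ ball c₂ r₂ ∩ Ω ∧ (ball c₂ r₂ ∩ Ω).Nonempty ∧
    (ball c₂ r₂ ∩ Ωᶜ).Nonempty

theorem AdmissibleBallPair.ball_subset {Ω : Set α} {c₁ c₂ : α} {r₁ r₂ : ℝ}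
    (h : AdmissibleBallPair Ω c₁ c₂ r₁ r₂) : ball c₁ r₁ ⊆ ball c₂ r₂ ∩ Ω :=
  ball_subset_closedBall.trans h.2.2.1

theorem AdmissibleBallPair.exists_denseRange_rat [ProperSpace α] {c : ℕ → α} (hc : DenseRange c)
    {Ω : Set α} {c₁ c₂ : α} {r₁ r₂ : ℝ} (h : AdmissibleBallPair Ω c₁ c₂ r₁ r₂) :
    ∃ (i j : ℕ) (q₁ q₂ : ℚ), AdmissibleBallPair Ω (c i) (c j) q₁ q₂ ∧
      ball (c i) q₁ ⊆ ball c₁ r₁ ∧ ball (c j) q₂ ⊆ ball c₂ r₂ := by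
  obtain ⟨hr₁, -, hsub, -, w, hw, hwΩ⟩ := h
  obtain ⟨i, hi⟩ := hc.exists_mem_open isOpen_ball ⟨c₁, mem_ball_self (half_pos hr₁)⟩
  obtain ⟨q₁, hq₁, hq₁r⟩ := exists_rat_btwn (half_pos hr₁)
  have hi' := mem_ball.1 hi
  have hinner : closedBall (c i) q₁ ⊆ closedBall c₁ r₁ :=
    closedBall_subset_closedBall' (by linarith)
  -- The compact set `closedBall c₁ r₁ ∪ {w}` stays inside a slightly smaller concentric ball,
  -- which leaves room to move the centre and round the radius.
  obtain ⟨r, hr, hK⟩ := exists_lt_subset_ball (isClosed_closedBall.union isClosed_singleton)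
    (union_subset (fun z hz => (hsub hz).1) (singleton_subset_iff.2 hw))
  obtain ⟨j, hj⟩ := hc.exists_mem_open isOpen_ball
    ⟨c₂, mem_ball_self (show 0 < (r₂ - r) / 3 by linarith)⟩
  have hj' := mem_ball.1 hj
  obtain ⟨q₂, hq₂, hq₂r⟩ :=
    exists_rat_btwn (show r + (r₂ - r) / 3 < r₂ - (r₂ - r) / 3 by linarith)
  have hK' := hK.trans (ball_subset_ball' (by linarith [dist_comm c₂ (c j)]) :
    ball c₂ r ⊆ ball (c j) q₂)
  have hw' : w ∈ ball (c j) q₂ := hK' (Or.inr rfl)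
  have hinner' : closedBall (c i) q₁ ⊆ ball (c j) q₂ ∩ Ω := fun z hz =>
    ⟨hK' (Or.inl (hinner hz)), (hsub (hinner hz)).2⟩
  exact ⟨i, j, q₁, q₂, ⟨hq₁, pos_of_mem_ball hw', hinner',
    ⟨c i, hinner' (mem_closedBall_self hq₁.le)⟩, ⟨w, hw', hwΩ⟩⟩,
    ball_subset_ball' (by linarith), ball_subset_ball' (by linarith)⟩

end BallPair

theorem isClosed_setOf_admissibleBallPair_hasBoundedExtension [ProperSpace E] [CompleteSpace F]
    {X : Type*} [TopologicalSpace X] [SequentialSpace X] (ev : X → E → F) {Ω : Set E}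
    (hev : ∀ (u : ℕ → X) (x : X), Tendsto u atTop (𝓝 x) →
      ∀ z ∈ Ω, Tendsto (fun n => ev (u n) z) atTop (𝓝 (ev x z)))
    (c₁ c₂ : E) (r₁ r₂ M : ℝ) :
    IsClosed {x | AdmissibleBallPair Ω c₁ c₂ r₁ r₂ ∧
      HasBoundedExtension (ev x) (ball c₁ r₁) (ball c₂ r₂) M} := by
  by_cases hp : AdmissibleBallPair Ω c₁ c₂ r₁ r₂
  · simpa only [hp, true_and] using isClosed_setOf_hasBoundedExtension ev
      (fun u x hu z hz => hev u x hu z (hp.ball_subset hz).2) isOpen_ball (nonempty_ball.2 hp.1)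
      (fun z hz => (hp.ball_subset hz).1) isOpen_ball (convex_ball _ _).isPreconnected
  · simp [hp]

end Holomorphic

theorem ExtendableRiemann.exists_denseSeq_rat_nat {d : ℕ} {Ω : Set (EuclideanSpace ℂ (Fin d))}
    {f : EuclideanSpace ℂ (Fin d) → ℂ} (hf : ExtendableRiemann Ω f) :
    ∃ (i j : ℕ) (q₁ q₂ : ℚ) (N : ℕ),
      AdmissibleBallPair Ω (denseSeq _ i) (denseSeq _ j) q₁ q₂ ∧
        HasBoundedExtension f (ball (denseSeq _ i) q₁) (ball (denseSeq _ j) q₂) N := by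
  obtain ⟨c₁, c₂, r₁, r₂, hr₁, hr₂, hsub, hΩ, hΩc, F, M, hF⟩ := hf
  obtain ⟨i, j, q₁, q₂, hadm, h₁, h₂⟩ :=
    AdmissibleBallPair.exists_denseRange_rat (denseRange_denseSeq _) ⟨hr₁, hr₂, hsub, hΩ, hΩc⟩
  obtain ⟨N, hN⟩ := exists_nat_ge M
  exact ⟨i, j, q₁, q₂, N, hadm, HasBoundedExtension.mono ⟨F, hF⟩ h₁ h₂ hN⟩

theorem stmt9_general {d : ℕ} (Ω : Set (EuclideanSpace ℂ (Fin d)))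
    (X : Type*) [AddCommGroup X] [Module ℂ X] [MetricSpace X] [CompleteSpace X]
    [IsTopologicalAddGroup X] [ContinuousSMul ℂ X]
    (ι : X →ₗ[ℂ] (EuclideanSpace ℂ (Fin d) → ℂ))
    (hptw : ∀ (g : ℕ → X) (f : X), Tendsto g atTop (nhds f) →
      ∀ z ∈ Ω, Tendsto (fun n => ι (g n) z) atTop (nhds (ι f z)))
    :
    (∃ f : X, ¬ ExtendableRiemann Ω (ι f)) ↔
    (∀ (c₁ c₂ : EuclideanSpace ℂ (Fin d)) (r₁ r₂ : ℝ), 0 < r₁ → 0 < r₂ →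
      closedBall c₁ r₁ ⊆ ball c₂ r₂ ∩ Ω →
      (ball c₂ r₂ ∩ Ω).Nonempty → (ball c₂ r₂ ∩ Ωᶜ).Nonempty →
      ∃ f : X, ¬ ∃ (F : EuclideanSpace ℂ (Fin d) → ℂ) (M : ℝ),
        DifferentiableOn ℂ F (ball c₂ r₂) ∧
        (∀ z ∈ ball c₂ r₂, ‖F z‖ ≤ M) ∧
        EqOn F (ι f) (ball c₁ r₁)) := by
  constructor
  · rintro ⟨f, hf⟩ c₁ c₂ r₁ r₂ hr₁ hr₂ hsub hΩ hΩc
    exact ⟨f, fun ⟨F, M, hF⟩ => hf ⟨c₁, c₂, r₁, r₂, hr₁, hr₂, hsub, hΩ, hΩc, F, M, hF⟩⟩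
  intro hweak
  by_contra! hext
  let S : ℕ × ℕ × ℚ × ℚ × ℕ → Set X := fun ⟨i, j, q₁, q₂, N⟩ =>
    {f | AdmissibleBallPair Ω (denseSeq _ i) (denseSeq _ j) q₁ q₂ ∧
      HasBoundedExtension (ι f) (ball (denseSeq _ i) q₁) (ball (denseSeq _ j) q₂) N}
  have hS : ∀ p, IsClosed (S p) := fun ⟨_, _, _, _, _⟩ =>
    isClosed_setOf_admissibleBallPair_hasBoundedExtension ι hptw _ _ _ _ _
  have hcover : ⋃ p, S p = univ := eq_univ_of_forall fun f => by
    obtain ⟨i, j, q₁, q₂, N, h⟩ := (hext f).exists_denseSeq_rat_nat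
    exact mem_iUnion.2 ⟨(i, j, q₁, q₂, N), h⟩
  obtain ⟨⟨i, j, q₁, q₂, N⟩, x₀, hx₀⟩ := nonempty_interior_of_iUnion_of_closed hS hcover
  obtain ⟨hp, -⟩ := interior_subset hx₀
  obtain ⟨h, hh⟩ := hweak _ _ _ _ hp.1 hp.2.1 hp.2.2.1 hp.2.2.2.1 hp.2.2.2.2
  obtain ⟨M, F, hF⟩ :=
    exists_hasBoundedExtension_of_mem_interior ι (interior_mono (fun _ hf => hf.2) hx₀) h
  exact hh ⟨F, M, hF⟩

theorem stmt9 {d : ℕ} (Ω : Set (EuclideanSpace ℂ (Fin d)))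
    (hΩo : IsOpen Ω) (hΩc : IsConnected Ω)
    (X : Type*) [AddCommGroup X] [Module ℂ X] [MetricSpace X] [CompleteSpace X]
    [IsTopologicalAddGroup X] [ContinuousSMul ℂ X]
    (ι : X →ₗ[ℂ] (EuclideanSpace ℂ (Fin d) → ℂ)) (hinj : Function.Injective ι)
    (hholo : ∀ f : X, DifferentiableOn ℂ (ι f) Ω)
    (hptw : ∀ (g : ℕ → X) (f : X), Tendsto g atTop (nhds f) →
      ∀ z ∈ Ω, Tendsto (fun n => ι (g n) z) atTop (nhds (ι f z)))
    :
    (∃ f : X, ¬ ExtendableRiemann Ω (ι f)) ↔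
    (∀ (c₁ c₂ : EuclideanSpace ℂ (Fin d)) (r₁ r₂ : ℝ), 0 < r₁ → 0 < r₂ →
      closedBall c₁ r₁ ⊆ ball c₂ r₂ ∩ Ω →
      (ball c₂ r₂ ∩ Ω).Nonempty → (ball c₂ r₂ ∩ Ωᶜ).Nonempty →
      ∃ f : X, ¬ ∃ (F : EuclideanSpace ℂ (Fin d) → ℂ) (M : ℝ),
        DifferentiableOn ℂ F (ball c₂ r₂) ∧
        (∀ z ∈ ball c₂ r₂, ‖F z‖ ≤ M) ∧
        EqOn F (ι f) (ball c₁ r₁)) :=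
  stmt9_general Ω X ι hptw
end

section
/- Let U ⊆ ℂ be open, L ⊆ ℂ a straight line, and f : U → ℂ continuous on U and holomorphic on U \ L. Then f is holomorphic on U. -/
/-!
The affine change of variables `w ↦ a + w * b` moves `L` to the real axis, so it suffices to
treat `L = ℝ`. There Morera's theorem applies: a rectangle crossing the real axis is cut along it
into two rectangles whose interiors avoid the axis, and the boundary integral over each vanishes by
the Cauchy–Goursat theorem for functions continuous on a closed rectangle and holomorphic inside.
-/

open Set Complex
open scoped Interval

namespace Complex

variable {E : Type*} [NormedAddCommGroup E] [NormedSpace ℂ E] {f : ℂ → E} {U : Set ℂ}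

lemma wedgeIntegral_add_wedgeIntegral_eq_split {z w : ℂ} {y : ℝ}
    (hf : ContinuousOn f (Rectangle z w)) (hy : y ∈ [[z.im, w.im]]) :
    wedgeIntegral z w f + wedgeIntegral w z f =
      (wedgeIntegral z ⟨w.re, y⟩ f + wedgeIntegral ⟨w.re, y⟩ z f) +
        (wedgeIntegral ⟨z.re, y⟩ w f + wedgeIntegral w ⟨z.re, y⟩ f) := by
  have hvert : ∀ x ∈ [[z.re, w.re]], ∀ c d : ℝ, [[c, d]] ⊆ [[z.im, w.im]] →
      IntervalIntegrable (fun t : ℝ ↦ f (x + t * I)) MeasureTheory.volume c d := by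
    refine fun x hx c d hcd ↦ (hf.comp (by fun_prop) fun t ht ↦ ?_).intervalIntegrable
    simpa [Rectangle, mem_reProdIm] using ⟨hx, hcd ht⟩
  have hlow := uIcc_subset_uIcc_left hy
  have hhigh := uIcc_subset_uIcc_right hy
  simp only [wedgeIntegral_add_wedgeIntegral_eq]
  rw [← intervalIntegral.integral_add_adjacent_intervals (hvert _ right_mem_uIcc _ _ hlow)
      (hvert _ right_mem_uIcc _ _ hhigh),
    ← intervalIntegral.integral_add_adjacent_intervals (hvert _ left_mem_uIcc _ _ hlow)
      (hvert _ left_mem_uIcc _ _ hhigh)]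
  simp only [smul_add]
  abel

lemma wedgeIntegral_add_wedgeIntegral_eq_zero_of_zero_notMem_uIoo {z w : ℂ}
    (hc : ContinuousOn f U) (hd : DifferentiableOn ℂ f (U \ {p | p.im = 0}))
    (hzw : Rectangle z w ⊆ U) (h0 : 0 ∉ uIoo z.im w.im) :
    wedgeIntegral z w f + wedgeIntegral w z f = 0 := by
  rw [wedgeIntegral_add_wedgeIntegral_eq]
  refine integral_boundary_rect_eq_zero_of_continuousOn_of_differentiableOn f z w
    (hc.mono hzw) (hd.mono fun p hp ↦ ⟨hzw ?_, ?_⟩)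
  · exact reProdIm_subset_iff.2 (prod_mono uIoo_subset_uIcc_self uIoo_subset_uIcc_self) hp
  · exact fun hp0 ↦ h0 (hp0 ▸ hp.2)

theorem isConservativeOn_of_differentiableOn_diff_im_eq_zero
    (hc : ContinuousOn f U) (hd : DifferentiableOn ℂ f (U \ {p | p.im = 0})) :
    IsConservativeOn f U := by
  intro z w hzw
  rw [← add_eq_zero_iff_eq_neg]
  by_cases h0 : (0 : ℝ) ∈ [[z.im, w.im]]
  · rw [wedgeIntegral_add_wedgeIntegral_eq_split (hc.mono hzw) h0]
    have hlow : Rectangle z ⟨w.re, 0⟩ ⊆ U :=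
      (reProdIm_subset_iff.2 (prod_mono subset_rfl (uIcc_subset_uIcc_left h0))).trans hzw
    have hhigh : Rectangle ⟨z.re, 0⟩ w ⊆ U :=
      (reProdIm_subset_iff.2 (prod_mono subset_rfl (uIcc_subset_uIcc_right h0))).trans hzw
    rw [wedgeIntegral_add_wedgeIntegral_eq_zero_of_zero_notMem_uIoo hc hd hlow right_notMem_uIoo,
      wedgeIntegral_add_wedgeIntegral_eq_zero_of_zero_notMem_uIoo hc hd hhigh left_notMem_uIoo,
      add_zero]
  · exact wedgeIntegral_add_wedgeIntegral_eq_zero_of_zero_notMem_uIoo hc hd hzw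
      fun h ↦ h0 (uIoo_subset_uIcc_self h)

theorem differentiableOn_of_differentiableOn_diff_im_eq_zero [CompleteSpace E] (hU : IsOpen U)
    (hc : ContinuousOn f U) (hd : DifferentiableOn ℂ f (U \ {p | p.im = 0})) :
    DifferentiableOn ℂ f U :=
  (isConservativeOn_and_continuousOn_iff_isDifferentiableOn hU).1
    ⟨isConservativeOn_of_differentiableOn_diff_im_eq_zero hc hd, hc⟩

end Complex

theorem stmt13 (U : Set ℂ) (hU : IsOpen U)
    (a b : ℂ) (hb : b ≠ 0)
    (L : Set ℂ) (hL : L = {z : ℂ | ∃ t : ℝ, z = a + (t : ℂ) * b})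
    (f : ℂ → ℂ)
    (hcont : ContinuousOn f U)
    (hdiff : DifferentiableOn ℂ f (U \ L)) :
    DifferentiableOn ℂ f U := by
  set φ : ℂ → ℂ := fun w ↦ a + w * b
  have hφ : Differentiable ℂ φ := by fun_prop
  have hφ_inv : ∀ z, φ ((z - a) / b) = z := fun z ↦ by simp [φ, div_mul_cancel₀ _ hb]
  have hφ_mapsTo : MapsTo φ (φ ⁻¹' U \ {w | w.im = 0}) (U \ L) := by
    subst hL
    rintro w ⟨hwU, hw⟩
    refine ⟨hwU, ?_⟩
    rintro ⟨t, ht⟩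
    have : w = t := mul_right_cancel₀ hb (add_left_cancel ht)
    exact hw (by simp [this])
  have hfφ : DifferentiableOn ℂ (f ∘ φ) (φ ⁻¹' U) :=
    differentiableOn_of_differentiableOn_diff_im_eq_zero (hU.preimage hφ.continuous)
      (hcont.comp hφ.continuous.continuousOn (mapsTo_preimage φ U))
      (hdiff.comp hφ.differentiableOn hφ_mapsTo)
  have hf : f = (f ∘ φ) ∘ fun z ↦ (z - a) / b := funext fun z ↦ by simp [hφ_inv]
  rw [hf]
  exact hfφ.comp (by fun_prop) fun z hz ↦ by simpa [hφ_inv] using hz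
end

section
/- Let Ω = {z ∈ ℂ : |z| < 1, z ∉ [0, 1/2]}. Then every function f continuous on cl(Ω) and holomorphic on Ω extends to a holomorphic function on the open unit disk; in particular Ω is not an A(Ω)-domain of holomorphy. -/
/-!
A continuous function that is holomorphic off the real axis is holomorphic: by Morera's theorem it
suffices that its integrals over rectangles vanish, and a rectangle crossing the axis splits along
it into two rectangles whose interiors miss the axis, where Cauchy–Goursat applies to functions
that are only continuous up to the boundary. The slit has empty interior, so the closure of `Ω`
contains the whole disk; hence `f` is continuous on the disk and holomorphic off the axis.
-/

open Metric Set

/-- `f` is extendable in the sense of Riemann domains from the planar domain `Ω`. -/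
def ExtendableRiemannC (Ω : Set ℂ) (f : ℂ → ℂ) : Prop :=
  ∃ (c₁ c₂ : ℂ) (r₁ r₂ : ℝ), 0 < r₁ ∧ 0 < r₂ ∧
    closedBall c₁ r₁ ⊆ ball c₂ r₂ ∩ Ω ∧
    (ball c₂ r₂ ∩ Ω).Nonempty ∧ (ball c₂ r₂ ∩ Ωᶜ).Nonempty ∧
    ∃ (F : ℂ → ℂ) (M : ℝ), DifferentiableOn ℂ F (ball c₂ r₂) ∧
      (∀ z ∈ ball c₂ r₂, ‖F z‖ ≤ M) ∧ EqOn F f (ball c₁ r₁)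

open scoped Interval

namespace Complex

variable {E : Type*} [NormedAddCommGroup E] {f : ℂ → E} {z w : ℂ}

theorem intervalIntegrable_vertical_of_continuousOn (hc : ContinuousOn f (Rectangle z w))
    {x a b : ℝ} (hx : x ∈ [[z.re, w.re]]) (ha : a ∈ [[z.im, w.im]]) (hb : b ∈ [[z.im, w.im]]) :
    IntervalIntegrable (fun y : ℝ => f (x + y * I)) MeasureTheory.volume a b := by
  refine (hc.comp (by fun_prop : Continuous fun y : ℝ => (x : ℂ) + y * I).continuousOn
    fun y hy => ?_).intervalIntegrable
  exact ⟨by simpa using hx, by simpa using uIcc_subset_uIcc ha hb hy⟩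

variable [NormedSpace ℂ E]

-- `0 ≤ z.im * w.im` says that the open rectangle misses the real axis.
theorem wedgeIntegral_add_wedgeIntegral_eq_zero_of_im_mul_nonneg
    (hc : ContinuousOn f (Rectangle z w))
    (hd : ∀ u ∈ Rectangle z w, u.im ≠ 0 → DifferentiableAt ℂ f u)
    (him : 0 ≤ z.im * w.im) :
    wedgeIntegral z w f + wedgeIntegral w z f = 0 := by
  rw [wedgeIntegral_add_wedgeIntegral_eq]
  refine integral_boundary_rect_eq_zero_of_differentiable_on_off_countable f z w ∅
    countable_empty hc ?_
  rintro u ⟨⟨hre, hu⟩, -⟩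
  refine hd u ⟨Ioo_subset_Icc_self hre, Ioo_subset_Icc_self hu⟩ fun hu0 => ?_
  rw [mem_preimage, mem_Ioo, hu0, min_lt_iff, lt_max_iff] at hu
  rcases hu with ⟨h | h, h' | h'⟩ <;> nlinarith

theorem wedgeIntegral_add_wedgeIntegral_split (hc : ContinuousOn f (Rectangle z w)) {t : ℝ}
    (ht : t ∈ [[z.im, w.im]]) :
    wedgeIntegral z w f + wedgeIntegral w z f =
      (wedgeIntegral z (w.re + t * I) f + wedgeIntegral (w.re + t * I) z f) +
      (wedgeIntegral (z.re + t * I) w f + wedgeIntegral w (z.re + t * I) f) := by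
  have hz : z.im ∈ [[z.im, w.im]] := left_mem_uIcc
  have hw : w.im ∈ [[z.im, w.im]] := right_mem_uIcc
  simp only [wedgeIntegral_add_wedgeIntegral_eq, add_re, ofReal_re, mul_re, I_re, mul_zero,
    ofReal_im, I_im, mul_one, sub_self, add_zero, add_im, mul_im, zero_add]
  rw [← intervalIntegral.integral_add_adjacent_intervals
      (intervalIntegrable_vertical_of_continuousOn hc right_mem_uIcc hz ht)
      (intervalIntegrable_vertical_of_continuousOn hc right_mem_uIcc ht hw),
    ← intervalIntegral.integral_add_adjacent_intervals
      (intervalIntegrable_vertical_of_continuousOn hc left_mem_uIcc hz ht)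
      (intervalIntegrable_vertical_of_continuousOn hc left_mem_uIcc ht hw)]
  simp only [smul_add]
  abel

theorem rectangle_subset_of_mem_uIcc {t : ℝ} (ht : t ∈ [[z.im, w.im]]) :
    Rectangle z (w.re + t * I) ⊆ Rectangle z w ∧ Rectangle (z.re + t * I) w ⊆ Rectangle z w :=
  ⟨fun u hu => ⟨by simpa using hu.1, uIcc_subset_uIcc_left ht (by simpa using hu.2)⟩,
    fun u hu => ⟨by simpa using hu.1, uIcc_subset_uIcc_right ht (by simpa using hu.2)⟩⟩

theorem isConservativeOn_of_differentiableAt_im_ne_zero {U : Set ℂ} (hc : ContinuousOn f U)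
    (hd : ∀ u ∈ U, u.im ≠ 0 → DifferentiableAt ℂ f u) : IsConservativeOn f U := by
  intro z w hzw
  rw [← add_eq_zero_iff_eq_neg]
  have hc' := hc.mono hzw
  have hd' : ∀ u ∈ Rectangle z w, u.im ≠ 0 → DifferentiableAt ℂ f u := fun u hu => hd u (hzw hu)
  by_cases him : 0 ≤ z.im * w.im
  · exact wedgeIntegral_add_wedgeIntegral_eq_zero_of_im_mul_nonneg hc' hd' him
  have h0 : (0 : ℝ) ∈ [[z.im, w.im]] := by
    rw [mem_uIcc]; rcases le_total z.im 0 with h | h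
    · left; constructor <;> nlinarith
    · right; constructor <;> nlinarith
  obtain ⟨hsub₁, hsub₂⟩ := rectangle_subset_of_mem_uIcc h0
  rw [wedgeIntegral_add_wedgeIntegral_split hc' h0,
    wedgeIntegral_add_wedgeIntegral_eq_zero_of_im_mul_nonneg (hc'.mono hsub₁)
      (fun u hu => hd' u (hsub₁ hu)) (by simp),
    wedgeIntegral_add_wedgeIntegral_eq_zero_of_im_mul_nonneg (hc'.mono hsub₂)
      (fun u hu => hd' u (hsub₂ hu)) (by simp), add_zero]

theorem differentiableOn_of_differentiableAt_im_ne_zero [CompleteSpace E] {U : Set ℂ}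
    (hU : IsOpen U) (hc : ContinuousOn f U) (hd : ∀ u ∈ U, u.im ≠ 0 → DifferentiableAt ℂ f u) :
    DifferentiableOn ℂ f U :=
  (isConservativeOn_and_continuousOn_iff_isDifferentiableOn hU).1
    ⟨isConservativeOn_of_differentiableAt_im_ne_zero hc hd, hc⟩

theorem dense_setOf_im_ne_zero : Dense {z : ℂ | z.im ≠ 0} := by
  refine dense_iff_closure_eq.2 (eq_univ_of_forall fun z => ?_)
  rcases le_total 0 z.im with h | h
  · exact closure_mono (s := {u : ℂ | 0 < u.im}) (fun _ hu => ne_of_gt hu)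
      (by rwa [closure_setOfPred_lt_im])
  · exact closure_mono (s := {u : ℂ | u.im < 0}) (fun _ hu => ne_of_lt hu)
      (by rwa [closure_setOfPred_im_lt])

end Complex

open Complex

theorem extendableRiemannC_of_differentiableOn {Ω : Set ℂ} {f : ℂ → ℂ} {c₁ c₂ : ℂ} {r₁ r₂ : ℝ}
    (hr₁ : 0 < r₁) (hsub : closedBall c₁ r₁ ⊆ ball c₂ r₂ ∩ Ω) (hout : (ball c₂ r₂ ∩ Ωᶜ).Nonempty)
    (hf : DifferentiableOn ℂ f (closedBall c₂ r₂)) : ExtendableRiemannC Ω f := by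
  obtain ⟨M, hM⟩ := (isCompact_closedBall c₂ r₂).exists_bound_of_continuousOn hf.continuousOn
  have hc₁ : c₁ ∈ ball c₂ r₂ ∩ Ω := hsub (mem_closedBall_self hr₁.le)
  exact ⟨c₁, c₂, r₁, r₂, hr₁, pos_of_mem_ball hc₁.1, hsub, ⟨c₁, hc₁⟩, hout, f, M,
    hf.mono ball_subset_closedBall, fun z hz => hM z (ball_subset_closedBall hz), eqOn_refl f _⟩

theorem closedBall_I_div_four_subset :
    closedBall (I / 4) (1 / 8) ⊆ ball (0 : ℂ) (1 / 2) ∩ {z | z.im ≠ 0} := by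
  intro z hz
  rw [mem_closedBall, dist_eq_norm] at hz
  have him : |z.im - 1 / 4| ≤ 1 / 8 := by simpa using (abs_im_le_norm (z - I / 4)).trans hz
  refine ⟨mem_ball_zero_iff.2 ?_, ne_of_gt (by linarith [(abs_le.1 him).1])⟩
  calc ‖z‖ ≤ ‖z - I / 4‖ + ‖I / 4‖ := norm_le_norm_sub_add z (I / 4)
    _ < 1 / 2 := by norm_num [norm_div]; linarith

theorem stmt14 (Ω : Set ℂ)
    (hΩ : Ω = {z : ℂ | ‖z‖ < 1 ∧ z ∉ segment ℝ (0 : ℂ) (1/2 : ℂ)})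
    (f : ℂ → ℂ) (hcont : ContinuousOn f (closure Ω))
    (hdiff : DifferentiableOn ℂ f Ω) :
    (∃ g : ℂ → ℂ, DifferentiableOn ℂ g (ball (0 : ℂ) 1) ∧ EqOn g f Ω) ∧
    ExtendableRiemannC Ω f := by
  set V : Set ℂ := ball 0 1 ∩ {z | z.im ≠ 0}
  have hVΩ : V ⊆ Ω := by
    rintro z ⟨hz, him⟩
    rw [hΩ]
    exact ⟨mem_ball_zero_iff.1 hz,
      fun hS => him ((convex_hyperplane imLm.isLinear 0).segment_subset (by simp) (by simp) hS)⟩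
  have hV : IsOpen V := isOpen_ball.inter (isOpen_ne_fun continuous_im continuous_const)
  have hball : ball (0 : ℂ) 1 ⊆ closure Ω :=
    (dense_setOf_im_ne_zero.open_subset_closure_inter isOpen_ball).trans (closure_mono hVΩ)
  have hholo : DifferentiableOn ℂ f (ball 0 1) :=
    differentiableOn_of_differentiableAt_im_ne_zero isOpen_ball (hcont.mono hball)
      fun z hz him => (hdiff.mono hVΩ).differentiableAt (hV.mem_nhds ⟨hz, him⟩)
  refine ⟨⟨f, hholo, eqOn_refl f Ω⟩, extendableRiemannC_of_differentiableOn (c₁ := I / 4)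
    (r₁ := 1 / 8) (c₂ := 0) (r₂ := 1 / 2) (by norm_num) ?_ ?_
    (hholo.mono (closedBall_subset_ball (by norm_num)))⟩
  · intro z hz
    obtain ⟨hz₁, hz₂⟩ := closedBall_I_div_four_subset hz
    exact ⟨hz₁, hVΩ ⟨ball_subset_ball (by norm_num) hz₁, hz₂⟩⟩
  · refine ⟨1 / 4, mem_ball_zero_iff.2 (by norm_num), fun h => ?_⟩
    rw [hΩ] at h
    exact h.2 ⟨1 / 2, 1 / 2, by norm_num, by norm_num, by norm_num, by norm_num⟩
end
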